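/- arXiv:1011.4636 — 4 statements merged into one kernel-verified Lean document; each statement's English description precedes it below -/
import Mathlib

section
/- Let γ₁ and γ₂ be densely defined, closed, accretive, semisectorial quadratic forms on a Hilbert space h such that Dom γ₁ ∩ Dom γ₂ is dense in h. Then the sum form γ = γ₁ + γ₂, with domain Dom γ₁ ∩ Dom γ₂, is again closed, accretive and semisectorial. -/
/-!
STATEMENT 3: Let γ₁ and γ₂ be densely defined, closed, accretive, semisectorial
quadratic forms on a Hilbert space h such that Dom γ₁ ∩ Dom γ₂ is dense in h.
Then the sum form γ = γ₁ + γ₂, with domain Dom γ₁ ∩ Dom γ₂, is again closed,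
accretive and semisectorial.
-/

open Filter

noncomputable section

variable {h : Type*} [NormedAddCommGroup h] [InnerProductSpace ℂ h]

/-- A quadratic form with domain: a submodule `dom` together with the form values
`q` (only the values on `dom` are relevant). -/
structure QuadForm (h : Type*) [NormedAddCommGroup h] [InnerProductSpace ℂ h] where
  dom : Submodule ℂ h
  q : h → ℂ

namespace QuadForm

/-- Accretive: `Re q[u] ≥ 0` on the domain. -/
def Accretive (γ : QuadForm h) : Prop := ∀ u ∈ γ.dom, 0 ≤ (γ.q u).re

/-- Semisectorial: `|Im q[u]| ≤ C ‖u‖₊² = C (Re q[u] + ‖u‖²)` on the domain, for some `C ≥ 0`. -/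
def Semisectorial (γ : QuadForm h) : Prop :=
  ∃ C : ℝ, 0 ≤ C ∧ ∀ u ∈ γ.dom, |(γ.q u).im| ≤ C * ((γ.q u).re + ‖u‖ ^ 2)

/-- Closed: the domain is complete with respect to the norm
`‖u‖₊ = (Re q[u] + ‖u‖²)^{1/2}`, expressed via Cauchy sequences: every sequence in the
domain which is Cauchy for `‖·‖₊` has a limit `x` in the domain, with `‖uₙ − x‖₊ → 0`. -/
def IsClosedForm (γ : QuadForm h) : Prop :=
  ∀ u : ℕ → h, (∀ n, u n ∈ γ.dom) →
    (∀ ε > (0:ℝ), ∃ N, ∀ m ≥ N, ∀ n ≥ N,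
      (γ.q (u m - u n)).re + ‖u m - u n‖ ^ 2 < ε) →
    ∃ x ∈ γ.dom, Tendsto (fun n => (γ.q (u n - x)).re + ‖u n - x‖ ^ 2) atTop (nhds 0)

/-- The sum of two quadratic forms, with domain the intersection of the domains. -/
def add (γ₁ γ₂ : QuadForm h) : QuadForm h :=
  ⟨γ₁.dom ⊓ γ₂.dom, fun u => γ₁.q u + γ₂.q u⟩

end QuadForm

/-! Accretivity of both forms makes `‖u‖₊²` of the sum dominate `‖u‖₊²` of each summand, so a
sequence that is Cauchy for the sum is Cauchy for both forms. Their two limits coincide, since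
`‖·‖₊` dominates the norm of `h`, and `‖u - x‖₊²` of the sum is bounded by the sum of the two
`‖u - x‖₊²`. -/

namespace QuadForm

variable {γ γ₁ γ₂ : QuadForm h}

/-- The square `‖u‖₊²` of the form norm. -/
def plusNormSq (γ : QuadForm h) (u : h) : ℝ := (γ.q u).re + ‖u‖ ^ 2

@[simp]
theorem add_q (u : h) : (γ₁.add γ₂).q u = γ₁.q u + γ₂.q u := rfl

theorem plusNormSq_add (u : h) :
    (γ₁.add γ₂).plusNormSq u = γ₁.plusNormSq u + (γ₂.q u).re := by
  simp only [plusNormSq, add_q, Complex.add_re]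
  ring

theorem Accretive.add (ha₁ : γ₁.Accretive) (ha₂ : γ₂.Accretive) : (γ₁.add γ₂).Accretive :=
  fun u hu => add_nonneg (ha₁ u hu.1) (ha₂ u hu.2)

theorem Accretive.norm_sq_le_plusNormSq (ha : γ.Accretive) {u : h} (hu : u ∈ γ.dom) :
    ‖u‖ ^ 2 ≤ γ.plusNormSq u :=
  le_add_of_nonneg_left (ha u hu)

theorem Accretive.plusNormSq_nonneg (ha : γ.Accretive) {u : h} (hu : u ∈ γ.dom) :
    0 ≤ γ.plusNormSq u :=
  (sq_nonneg _).trans (ha.norm_sq_le_plusNormSq hu)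

theorem Accretive.plusNormSq_le_add_left (ha₂ : γ₂.Accretive) {u : h} (hu : u ∈ γ₂.dom) :
    γ₁.plusNormSq u ≤ (γ₁.add γ₂).plusNormSq u := by
  rw [plusNormSq_add]
  exact le_add_of_nonneg_right (ha₂ u hu)

theorem Accretive.plusNormSq_le_add_right (ha₁ : γ₁.Accretive) {u : h} (hu : u ∈ γ₁.dom) :
    γ₂.plusNormSq u ≤ (γ₁.add γ₂).plusNormSq u := by
  have : (γ₁.add γ₂).plusNormSq u = γ₂.plusNormSq u + (γ₁.q u).re := by
    simp only [plusNormSq, add_q, Complex.add_re]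
    ring
  rw [this]
  exact le_add_of_nonneg_right (ha₁ u hu)

theorem plusNormSq_add_le_add (u : h) :
    (γ₁.add γ₂).plusNormSq u ≤ γ₁.plusNormSq u + γ₂.plusNormSq u := by
  rw [plusNormSq_add]
  unfold plusNormSq
  linarith [sq_nonneg ‖u‖]

theorem Accretive.tendsto_of_plusNormSq_tendsto_zero (ha : γ.Accretive) {u : ℕ → h} {x : h}
    (hu : ∀ n, u n - x ∈ γ.dom)
    (hlim : Tendsto (fun n => γ.plusNormSq (u n - x)) atTop (nhds 0)) :
    Tendsto u atTop (nhds x) := by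
  have hsq : Tendsto (fun n => ‖u n - x‖ ^ 2) atTop (nhds 0) :=
    squeeze_zero (fun _ => sq_nonneg _) (fun n => ha.norm_sq_le_plusNormSq (hu n)) hlim
  rw [tendsto_iff_norm_sub_tendsto_zero]
  simpa [Real.sqrt_sq (norm_nonneg _)] using hsq.sqrt

theorem IsClosedForm.add (hc₁ : γ₁.IsClosedForm) (hc₂ : γ₂.IsClosedForm)
    (ha₁ : γ₁.Accretive) (ha₂ : γ₂.Accretive) : (γ₁.add γ₂).IsClosedForm := by
  intro u hu hcau
  have hdiff (m n : ℕ) : u m - u n ∈ γ₁.dom ⊓ γ₂.dom := sub_mem (hu m) (hu n)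
  have cauchy_of_le (γ : QuadForm h)
      (hle : ∀ m n, γ.plusNormSq (u m - u n) ≤ (γ₁.add γ₂).plusNormSq (u m - u n))
      (ε : ℝ) (hε : 0 < ε) : ∃ N, ∀ m ≥ N, ∀ n ≥ N, γ.plusNormSq (u m - u n) < ε := by
    obtain ⟨N, hN⟩ := hcau ε hε
    exact ⟨N, fun m hm n hn => (hle m n).trans_lt (hN m hm n hn)⟩
  obtain ⟨x₁, hx₁, hlim₁⟩ := hc₁ u (fun n => (hu n).1)
    (cauchy_of_le γ₁ fun m n => ha₂.plusNormSq_le_add_left (hdiff m n).2)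
  obtain ⟨x₂, hx₂, hlim₂⟩ := hc₂ u (fun n => (hu n).2)
    (cauchy_of_le γ₂ fun m n => ha₁.plusNormSq_le_add_right (hdiff m n).1)
  obtain rfl : x₁ = x₂ := tendsto_nhds_unique
    (ha₁.tendsto_of_plusNormSq_tendsto_zero (fun n => sub_mem (hu n).1 hx₁) hlim₁)
    (ha₂.tendsto_of_plusNormSq_tendsto_zero (fun n => sub_mem (hu n).2 hx₂) hlim₂)
  refine ⟨x₁, ⟨hx₁, hx₂⟩, ?_⟩
  have hmem (n : ℕ) : u n - x₁ ∈ γ₁.dom ⊓ γ₂.dom := sub_mem (hu n) ⟨hx₁, hx₂⟩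
  have hlim : Tendsto (fun n => γ₁.plusNormSq (u n - x₁) + γ₂.plusNormSq (u n - x₁)) atTop
      (nhds 0) := by
    rw [← add_zero (0 : ℝ)]
    exact hlim₁.add hlim₂
  exact squeeze_zero (fun n => (ha₁.add ha₂).plusNormSq_nonneg (hmem n))
    (fun n => plusNormSq_add_le_add (u n - x₁)) hlim

theorem Semisectorial.add (hs₁ : γ₁.Semisectorial) (hs₂ : γ₂.Semisectorial)
    (ha₁ : γ₁.Accretive) (ha₂ : γ₂.Accretive) : (γ₁.add γ₂).Semisectorial := by
  obtain ⟨C₁, hC₁, hbound₁⟩ := hs₁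
  obtain ⟨C₂, hC₂, hbound₂⟩ := hs₂
  refine ⟨C₁ + C₂, add_nonneg hC₁ hC₂, fun u hu => ?_⟩
  have hre₁ := ha₁ u hu.1
  have hre₂ := ha₂ u hu.2
  simp only [add_q, Complex.add_re, Complex.add_im]
  calc |(γ₁.q u).im + (γ₂.q u).im| ≤ |(γ₁.q u).im| + |(γ₂.q u).im| := abs_add_le _ _
    _ ≤ C₁ * ((γ₁.q u).re + ‖u‖ ^ 2) + C₂ * ((γ₂.q u).re + ‖u‖ ^ 2) :=
      add_le_add (hbound₁ u hu.1) (hbound₂ u hu.2)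
    _ ≤ (C₁ + C₂) * ((γ₁.q u).re + (γ₂.q u).re + ‖u‖ ^ 2) := by
      nlinarith [mul_nonneg hC₁ hre₂, mul_nonneg hC₂ hre₁]

end QuadForm

theorem sum_of_closed_accretive_semisectorial_forms_general
    (γ₁ γ₂ : QuadForm h)
    (hc₁ : γ₁.IsClosedForm) (hc₂ : γ₂.IsClosedForm)
    (ha₁ : γ₁.Accretive) (ha₂ : γ₂.Accretive)
    (hs₁ : γ₁.Semisectorial) (hs₂ : γ₂.Semisectorial) :
    (γ₁.add γ₂).IsClosedForm ∧ (γ₁.add γ₂).Accretive ∧ (γ₁.add γ₂).Semisectorial :=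
  ⟨hc₁.add hc₂ ha₁ ha₂, ha₁.add ha₂, hs₁.add hs₂ ha₁ ha₂⟩

theorem sum_of_closed_accretive_semisectorial_forms
    (γ₁ γ₂ : QuadForm h)
    (hd₁ : Dense (γ₁.dom : Set h)) (hd₂ : Dense (γ₂.dom : Set h))
    (hc₁ : γ₁.IsClosedForm) (hc₂ : γ₂.IsClosedForm)
    (ha₁ : γ₁.Accretive) (ha₂ : γ₂.Accretive)
    (hs₁ : γ₁.Semisectorial) (hs₂ : γ₂.Semisectorial)
    (hdense : Dense ((γ₁.dom ⊓ γ₂.dom : Submodule ℂ h) : Set h)) :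
    (γ₁.add γ₂).IsClosedForm ∧ (γ₁.add γ₂).Accretive ∧ (γ₁.add γ₂).Semisectorial :=
  sum_of_closed_accretive_semisectorial_forms_general γ₁ γ₂ hc₁ hc₂ ha₁ ha₂ hs₁ hs₂

end
end

section
/- Let γ be a quadratic form on a Hilbert space h with dense domain Q, let L, L̃ be operators from h to h⊗k with domain Q, and let C be a contraction on h⊗k. Define the quadratic form Γ on h ⊕ (h⊗k) with domain Q ⊕ (h⊗k) by Γ[(u,ξ)] := γ[u] − (⟨ξ, Lu⟩ + ⟨L̃u, ξ⟩ + ⟨ξ, (C−I)ξ⟩), and the operator ΔF(u,ξ) := (0, Lu + (C−I)ξ). If ‖ΔF ζ‖² ≤ 2 Re Γ[ζ] for all ζ ∈ Q ⊕ (h⊗k), then ‖Lu‖² ≤ 2 Re γ[u] and ‖L̃u‖² ≤ 2 Re γ[u] for all u ∈ Q. -/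
/-!
Taking `ξ = 0` gives the bound for `L`. For `L̃` take `ξ = L̃u` and put `w = Lu + Cξ`: the
inner products in `Γ` collapse to `⟨ξ, w⟩`, so the structure inequality reads
`‖w - ξ‖² ≤ 2 Re γ[u] - 2 Re ⟨ξ, w⟩`, which expands to `‖w‖² + ‖ξ‖² ≤ 2 Re γ[u]`.
-/

theorem norm_sq_add_norm_sq_le_of_norm_sub_sq_le {𝕜 E : Type*} [RCLike 𝕜]
    [NormedAddCommGroup E] [InnerProductSpace 𝕜 E] {w ξ : E} {c : ℝ}
    (h : ‖w - ξ‖ ^ 2 ≤ c - 2 * RCLike.re (inner 𝕜 ξ w)) :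
    ‖w‖ ^ 2 + ‖ξ‖ ^ 2 ≤ c := by
  rw [norm_sub_sq (𝕜 := 𝕜), inner_re_symm] at h
  linarith

theorem structure_inequality_truncation_general
    {h HK : Type*} [NormedAddCommGroup h] [InnerProductSpace ℂ h]
    [NormedAddCommGroup HK] [InnerProductSpace ℂ HK]
    (Q : Submodule ℂ h) (γ : h → ℂ) (L Ltilde : h → HK)
    (C : HK →L[ℂ] HK)
    (hineq : ∀ u ∈ Q, ∀ ξ : HK,
      ‖L u + (C ξ - ξ)‖ ^ 2 ≤
        2 * (γ u - ((inner ℂ ξ (L u) : ℂ) + (inner ℂ (Ltilde u) ξ : ℂ)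
            + (inner ℂ ξ (C ξ - ξ) : ℂ))).re) :
    ∀ u ∈ Q, ‖L u‖ ^ 2 ≤ 2 * (γ u).re ∧ ‖Ltilde u‖ ^ 2 ≤ 2 * (γ u).re := by
  intro u hu
  refine ⟨by simpa using hineq u hu 0, ?_⟩
  set ξ := Ltilde u
  set w := L u + C ξ
  have hvec : L u + (C ξ - ξ) = w - ξ := (add_sub_assoc _ _ _).symm
  have hinner : inner ℂ ξ (L u) + inner ℂ ξ ξ + inner ℂ ξ (C ξ - ξ) = inner ℂ ξ w := by
    rw [inner_sub_right, inner_add_right]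
    ring
  have hstruct := hineq u hu ξ
  rw [hvec, hinner, Complex.sub_re, mul_sub] at hstruct
  have hsum := norm_sq_add_norm_sq_le_of_norm_sub_sq_le (𝕜 := ℂ) hstruct
  linarith [sq_nonneg ‖w‖]

theorem structure_inequality_truncation
    {h HK : Type*} [NormedAddCommGroup h] [InnerProductSpace ℂ h]
    [NormedAddCommGroup HK] [InnerProductSpace ℂ HK]
    (Q : Submodule ℂ h) (γ : h → ℂ) (L Ltilde : h → HK)
    (C : HK →L[ℂ] HK) (hC : ‖C‖ ≤ 1)
    (hineq : ∀ u ∈ Q, ∀ ξ : HK,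
      ‖L u + (C ξ - ξ)‖ ^ 2 ≤
        2 * (γ u - ((inner ℂ ξ (L u) : ℂ) + (inner ℂ (Ltilde u) ξ : ℂ)
            + (inner ℂ ξ (C ξ - ξ) : ℂ))).re) :
    ∀ u ∈ Q, ‖L u‖ ^ 2 ≤ 2 * (γ u).re ∧ ‖Ltilde u‖ ^ 2 ≤ 2 * (γ u).re :=
  structure_inequality_truncation_general Q γ L Ltilde C hineq
end

section
/- Conversely: let F ∈ B(h ⊕ (h⊗k)) satisfy q(F) := F* + F + F*ΔF = 0 and r(F) := F + F* + FΔF* = 0, where Δ is the projection onto h⊗k. Then F has block matrix form [[iH − L*L/2, −L*C], [L, C − I]] for some bounded selfadjoint H on h, some L ∈ B(h; h⊗k), and some unitary C on h⊗k. -/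
/-!
Compress `q(F) = 0` and `r(F) = 0` to the blocks `[[A, B], [L, D]]` of `F`, using that `Δ` is
`inr ∘ snd`. The `(2,2)` blocks say exactly that `C = D + 1` satisfies `C*C = 1` and `CC* = 1`.
The `(1,1)` block of `q` says that the real part of `A` is `-L*L/2`, so
`A = i ℑA - L*L/2` with `ℑA` selfadjoint, and the `(1,2)` block gives `B = -L* - L*D = -L*C`.
-/

open ContinuousLinearMap

noncomputable section

theorem star_add_one_mul_add_one_eq_one {R : Type*} [Ring R] [StarRing R] {d : R}
    (hd : star d + d + star d * d = 0) : star (d + 1) * (d + 1) = 1 := by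
  calc star (d + 1) * (d + 1) = (star d + d + star d * d) + 1 := by
        simp only [star_add, star_one, add_mul, mul_add, one_mul, mul_one]; abel
    _ = 1 := by rw [hd, zero_add]

theorem add_one_mul_star_add_one_eq_one {R : Type*} [Ring R] [StarRing R] {d : R}
    (hd : d + star d + d * star d = 0) : (d + 1) * star (d + 1) = 1 := by
  simpa using star_add_one_mul_add_one_eq_one (d := star d) (by simpa using hd)

open ComplexStarModule in
theorem eq_I_smul_imaginaryPart_sub_half_smul {A : Type*} [AddCommGroup A] [Module ℂ A]
    [StarAddMonoid A] [StarModule ℂ A] {a c : A} (h : star a + a + c = 0) :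
    a = Complex.I • (ℑ a : A) - (1 / 2 : ℂ) • c := by
  have hre : (ℜ a : A) = -((1 / 2 : ℂ) • c) := by
    rw [realPart_apply_coe, add_comm, eq_neg_of_add_eq_zero_left h,
      RCLike.real_smul_eq_coe_smul (K := ℂ)]
    simp [smul_neg]
  conv_lhs => rw [← realPart_add_I_smul_imaginaryPart a, hre]
  abel

namespace WithLp

variable (𝕜 E F : Type*) [RCLike 𝕜] [NormedAddCommGroup E] [InnerProductSpace 𝕜 E]
  [NormedAddCommGroup F] [InnerProductSpace 𝕜 F]

def inlL : E →L[𝕜] WithLp 2 (E × F) :=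
  (prodContinuousLinearEquiv 2 𝕜 E F).symm.toContinuousLinearMap ∘L .inl 𝕜 E F

def inrL : F →L[𝕜] WithLp 2 (E × F) :=
  (prodContinuousLinearEquiv 2 𝕜 E F).symm.toContinuousLinearMap ∘L .inr 𝕜 E F

variable {𝕜 E F}

@[simp]
theorem inlL_apply (x : E) : inlL 𝕜 E F x = toLp 2 (x, 0) := rfl

@[simp]
theorem inrL_apply (y : F) : inrL 𝕜 E F y = toLp 2 (0, y) := rfl

theorem inlL_fst_add_inrL_snd (z : WithLp 2 (E × F)) :
    inlL 𝕜 E F z.fst + inrL 𝕜 E F z.snd = z := by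
  apply (WithLp.equiv 2 (E × F)).injective
  simp [Prod.ext_iff]

theorem apply_toLp_eq_blocks (T : WithLp 2 (E × F) →L[𝕜] WithLp 2 (E × F)) (u : E) (ξ : F) :
    T (toLp 2 (u, ξ)) =
      toLp 2 ((fstL 2 𝕜 E F ∘L T ∘L inlL 𝕜 E F) u + (fstL 2 𝕜 E F ∘L T ∘L inrL 𝕜 E F) ξ,
        (sndL 2 𝕜 E F ∘L T ∘L inlL 𝕜 E F) u + (sndL 2 𝕜 E F ∘L T ∘L inrL 𝕜 E F) ξ) := by
  rw [← inlL_fst_add_inrL_snd (𝕜 := 𝕜) (toLp 2 (u, ξ)), map_add]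
  apply (WithLp.equiv 2 (E × F)).injective
  simp [Prod.ext_iff]

theorem eq_inrL_comp_sndL {P : WithLp 2 (E × F) →L[𝕜] WithLp 2 (E × F)}
    (hP : ∀ u ξ, P (toLp 2 (u, ξ)) = toLp 2 (0, ξ)) : P = inrL 𝕜 E F ∘L sndL 2 𝕜 E F :=
  ext fun z ↦ by simpa [← ofLp_fst, ← ofLp_snd] using hP z.fst z.snd

variable [CompleteSpace E] [CompleteSpace F]

@[simp]
theorem adjoint_inlL : adjoint (inlL 𝕜 E F) = fstL 2 𝕜 E F :=
  (eq_adjoint_iff _ _ |>.mpr fun z x ↦ by simp).symm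

@[simp]
theorem adjoint_inrL : adjoint (inrL 𝕜 E F) = sndL 2 𝕜 E F :=
  (eq_adjoint_iff _ _ |>.mpr fun z y ↦ by simp).symm

@[simp]
theorem adjoint_fstL : adjoint (fstL 2 𝕜 E F) = inlL 𝕜 E F := by
  rw [← adjoint_inlL, adjoint_adjoint]

@[simp]
theorem adjoint_sndL : adjoint (sndL 2 𝕜 E F) = inrL 𝕜 E F := by
  rw [← adjoint_inrL, adjoint_adjoint]

end WithLp

open WithLp

theorem block_form_from_unitarity_conditions
    {h HK : Type*} [NormedAddCommGroup h] [InnerProductSpace ℂ h] [CompleteSpace h]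
    [NormedAddCommGroup HK] [InnerProductSpace ℂ HK] [CompleteSpace HK]
    (F Δ : WithLp 2 (h × HK) →L[ℂ] WithLp 2 (h × HK))
    (hΔ : ∀ u : h, ∀ ξ : HK,
      Δ ((WithLp.equiv 2 (h × HK)).symm (u, ξ)) = (WithLp.equiv 2 (h × HK)).symm (0, ξ))
    (hq : adjoint F + F + (adjoint F).comp (Δ.comp F) = 0)
    (hr : F + adjoint F + F.comp (Δ.comp (adjoint F)) = 0) :
    ∃ (H : h →L[ℂ] h) (L : h →L[ℂ] HK) (C : HK →L[ℂ] HK),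
      IsSelfAdjoint H ∧
      (adjoint C).comp C = 1 ∧ C.comp (adjoint C) = 1 ∧
      ∀ u : h, ∀ ξ : HK,
        F ((WithLp.equiv 2 (h × HK)).symm (u, ξ)) =
          (WithLp.equiv 2 (h × HK)).symm
            (Complex.I • H u - (1/2 : ℂ) • (adjoint L) (L u) - (adjoint L) (C ξ),
             L u + C ξ - ξ) := by
  obtain rfl : Δ = inrL ℂ h HK ∘L sndL 2 ℂ h HK := eq_inrL_comp_sndL hΔ
  set A := fstL 2 ℂ h HK ∘L F ∘L inlL ℂ h HK
  set B := fstL 2 ℂ h HK ∘L F ∘L inrL ℂ h HK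
  set L := sndL 2 ℂ h HK ∘L F ∘L inlL ℂ h HK
  set D := sndL 2 ℂ h HK ∘L F ∘L inrL ℂ h HK
  have hA : star A + A + adjoint L ∘L L = 0 := by
    simpa [A, L, star_eq_adjoint, adjoint_comp, add_comp, comp_add, comp_assoc]
      using congr(fstL 2 ℂ h HK ∘L $hq ∘L inlL ℂ h HK)
  have hB : adjoint L + B + adjoint L ∘L D = 0 := by
    simpa [B, L, D, adjoint_comp, add_comp, comp_add, comp_assoc]
      using congr(fstL 2 ℂ h HK ∘L $hq ∘L inrL ℂ h HK)
  have hDq : star D + D + star D * D = 0 := by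
    simpa [D, star_eq_adjoint, mul_def, adjoint_comp, add_comp, comp_add, comp_assoc]
      using congr(sndL 2 ℂ h HK ∘L $hq ∘L inrL ℂ h HK)
  have hDr : D + star D + D * star D = 0 := by
    simpa [D, star_eq_adjoint, mul_def, adjoint_comp, add_comp, comp_add, comp_assoc]
      using congr(sndL 2 ℂ h HK ∘L $hr ∘L inrL ℂ h HK)
  have hA' := eq_I_smul_imaginaryPart_sub_half_smul hA
  have hB' : B = -(adjoint L + adjoint L ∘L D) :=
    eq_neg_of_add_eq_zero_left (by rw [← hB]; abel)
  refine ⟨imaginaryPart A, L, D + 1, (imaginaryPart A).2, star_add_one_mul_add_one_eq_one hDq,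
    add_one_mul_star_add_one_eq_one hDr, fun u ξ ↦ ?_⟩
  rw [equiv_symm_apply, apply_toLp_eq_blocks]
  change toLp 2 (A u + B ξ, L u + D ξ) = _
  conv_lhs => rw [hA', hB']
  simp only [one_div, sub_apply, smul_apply, comp_apply, neg_add_rev, add_apply, neg_apply,
    one_apply_eq_self, map_add, toLp.injEq, Prod.mk.injEq]
  constructor <;> abel

end
end

section
/- If F₁ ∈ B(h ⊕ (h⊗k₁)) satisfies q(F₁) ≤ 0 and F₂ ∈ B(h ⊕ (h⊗k₂)) satisfies q(F₂) ≤ 0, then their concatenation product F = F₁ ⊞ F₂ ∈ B(h ⊕ (h⊗k₁) ⊕ (h⊗k₂)), given in block form by F = [[K₁+K₂, M₁, M₂],[L₁, C₁−I₁, 0],[L₂, 0, C₂−I₂]] where Fᵢ = [[Kᵢ, Mᵢ],[Lᵢ, Cᵢ−Iᵢ]], satisfies q(F) ≤ 0. -/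
/-!
Writing `F = [[K, M], [L, C - I]]`, the quadratic form of `q(F) = F* + F + F*ΔF` at `(u, ξ)` is
`2 Re(⟨u, Ku + Mξ⟩ + ⟨ξ, Lu + Cξ - ξ⟩) + ‖Lu + Cξ - ξ‖²`. For the concatenation product evaluated
at `(u, ξ₁, ξ₂)` every term splits into a `k₁`-part and a `k₂`-part, because the off-diagonal noise
blocks vanish, so its quadratic form is the sum of those of `F₁` at `(u, ξ₁)` and of `F₂` at
`(u, ξ₂)`, both nonpositive.
-/

open ContinuousLinearMap RCLike

section QuadraticForm

variable {𝕜 : Type*} [RCLike 𝕜]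

theorem re_inner_adjoint_add_add_adjoint_comp_comp {E : Type*} [NormedAddCommGroup E]
    [InnerProductSpace 𝕜 E] [CompleteSpace E] (T D : E →L[𝕜] E) (z : E) :
    re (inner 𝕜 z ((adjoint T + T + (adjoint T).comp (D.comp T)) z)) =
      2 * re (inner 𝕜 z (T z)) + re (inner 𝕜 (T z) (D (T z))) := by
  simp only [add_apply, comp_apply, inner_add_right, adjoint_inner_right, map_add]
  rw [inner_re_symm (T z) z]
  ring

variable {H K : Type*} [NormedAddCommGroup H] [InnerProductSpace 𝕜 H]
  [NormedAddCommGroup K] [InnerProductSpace 𝕜 K]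

theorem re_inner_apply_of_eq_toLp_zero_snd (Δ : WithLp 2 (H × K) → WithLp 2 (H × K))
    (hΔ : ∀ u ξ, Δ (WithLp.toLp 2 (u, ξ)) = WithLp.toLp 2 (0, ξ)) (u : H) (ξ : K) :
    re (inner 𝕜 (WithLp.toLp 2 (u, ξ)) (Δ (WithLp.toLp 2 (u, ξ)))) = ‖ξ‖ ^ 2 := by
  simp [hΔ]

theorem re_inner_qF_toLp [CompleteSpace H] [CompleteSpace K]
    (F Δ : WithLp 2 (H × K) →L[𝕜] WithLp 2 (H × K))
    (hΔ : ∀ u ξ, Δ (WithLp.toLp 2 (u, ξ)) = WithLp.toLp 2 (0, ξ))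
    {u : H} {ξ : K} {a : H} {b : K} (hF : F (WithLp.toLp 2 (u, ξ)) = WithLp.toLp 2 (a, b)) :
    re (inner 𝕜 (WithLp.toLp 2 (u, ξ))
        ((adjoint F + F + (adjoint F).comp (Δ.comp F)) (WithLp.toLp 2 (u, ξ)))) =
      2 * re (inner 𝕜 u a + inner 𝕜 ξ b) + ‖b‖ ^ 2 := by
  rw [re_inner_adjoint_add_add_adjoint_comp_comp, hF,
    re_inner_apply_of_eq_toLp_zero_snd Δ hΔ]
  rfl

end QuadraticForm

theorem concatenation_qF_nonpos
    {h K1 K2 : Type*} [NormedAddCommGroup h] [InnerProductSpace ℂ h] [CompleteSpace h]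
    [NormedAddCommGroup K1] [InnerProductSpace ℂ K1] [CompleteSpace K1]
    [NormedAddCommGroup K2] [InnerProductSpace ℂ K2] [CompleteSpace K2]
    (K₁ K₂ : h →L[ℂ] h) (M₁ : K1 →L[ℂ] h) (M₂ : K2 →L[ℂ] h)
    (L₁ : h →L[ℂ] K1) (L₂ : h →L[ℂ] K2)
    (C₁ : K1 →L[ℂ] K1) (C₂ : K2 →L[ℂ] K2)
    (F₁ Δ₁ : WithLp 2 (h × K1) →L[ℂ] WithLp 2 (h × K1))
    (F₂ Δ₂ : WithLp 2 (h × K2) →L[ℂ] WithLp 2 (h × K2))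
    (F Δ : WithLp 2 (h × WithLp 2 (K1 × K2)) →L[ℂ] WithLp 2 (h × WithLp 2 (K1 × K2)))
    (hΔ₁ : ∀ (u : h) (ξ : K1),
      Δ₁ ((WithLp.equiv 2 (h × K1)).symm (u, ξ)) = (WithLp.equiv 2 (h × K1)).symm (0, ξ))
    (hΔ₂ : ∀ (u : h) (ξ : K2),
      Δ₂ ((WithLp.equiv 2 (h × K2)).symm (u, ξ)) = (WithLp.equiv 2 (h × K2)).symm (0, ξ))
    (hΔ : ∀ (u : h) (ξ : WithLp 2 (K1 × K2)),
      Δ ((WithLp.equiv 2 _).symm (u, ξ)) = (WithLp.equiv 2 _).symm (0, ξ))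
    (hF₁ : ∀ (u : h) (ξ : K1),
      F₁ ((WithLp.equiv 2 (h × K1)).symm (u, ξ)) =
        (WithLp.equiv 2 (h × K1)).symm (K₁ u + M₁ ξ, L₁ u + C₁ ξ - ξ))
    (hF₂ : ∀ (u : h) (ξ : K2),
      F₂ ((WithLp.equiv 2 (h × K2)).symm (u, ξ)) =
        (WithLp.equiv 2 (h × K2)).symm (K₂ u + M₂ ξ, L₂ u + C₂ ξ - ξ))
    (hF : ∀ (u : h) (ξ₁ : K1) (ξ₂ : K2),
      F ((WithLp.equiv 2 _).symm (u, (WithLp.equiv 2 (K1 × K2)).symm (ξ₁, ξ₂))) =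
        (WithLp.equiv 2 _).symm
          (K₁ u + K₂ u + M₁ ξ₁ + M₂ ξ₂,
           (WithLp.equiv 2 (K1 × K2)).symm (L₁ u + C₁ ξ₁ - ξ₁, L₂ u + C₂ ξ₂ - ξ₂)))
    (hq₁ : ∀ z, (inner ℂ z ((adjoint F₁ + F₁ + (adjoint F₁).comp (Δ₁.comp F₁)) z) : ℂ).re ≤ 0)
    (hq₂ : ∀ z, (inner ℂ z ((adjoint F₂ + F₂ + (adjoint F₂).comp (Δ₂.comp F₂)) z) : ℂ).re ≤ 0) :
    ∀ z, (inner ℂ z ((adjoint F + F + (adjoint F).comp (Δ.comp F)) z) : ℂ).re ≤ 0 := by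
  simp only [WithLp.equiv_symm_apply] at hΔ₁ hΔ₂ hΔ hF₁ hF₂ hF
  rintro ⟨u, ⟨ξ₁, ξ₂⟩⟩
  have hq₁' := hq₁ (WithLp.toLp 2 (u, ξ₁))
  have hq₂' := hq₂ (WithLp.toLp 2 (u, ξ₂))
  rw [← RCLike.re_to_complex] at hq₁' hq₂' ⊢
  rw [re_inner_qF_toLp F₁ Δ₁ hΔ₁ (hF₁ u ξ₁)] at hq₁'
  rw [re_inner_qF_toLp F₂ Δ₂ hΔ₂ (hF₂ u ξ₂)] at hq₂'
  rw [re_inner_qF_toLp F Δ hΔ (hF u ξ₁ ξ₂), WithLp.prod_norm_sq_eq_of_L2]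
  simp only [WithLp.prod_inner_apply, WithLp.toLp_fst, WithLp.toLp_snd, inner_add_right, map_add]
    at hq₁' hq₂' ⊢
  linarith
end
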